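/- The derivative of the theta function at the special point, Θ₃'(π(1+i)/2, i) = i·Σ_{n∈ℤ} 2n·exp(−πn² + πin(1+i)) = i·Σ_{n∈ℤ} 2n·(−1)^n·exp(−πn² − πn), is a nonzero purely imaginary number. -/

import Mathlib

open Complex

noncomputable def Theta3' (u τ : ℂ) : ℂ :=
  ∑' n : ℤ, I * (2 * (n : ℂ)) *
    Complex.exp (Real.pi * I * τ * (n : ℂ) ^ 2 + 2 * I * (n : ℂ) * u)

/-!
Up to the factor `1 / π`, `Theta3'` is the `z`-derivative series `jacobiTheta₂'`, so it converges
for `0 < im τ`. At `u = π(1+i)/2`, `τ = i` the `n`-th term is `i · 2n(-1)ⁿe^{-πn(n+1)}`, so the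
value is `i` times a real sum. Pairing `n` with `-(n+1)` turns that sum into the alternating
series `∑ₙ (-1)ⁿ 2(2n+1)e^{-πn(n+1)}` with decreasing terms, which is at least
`2 - 6e^{-2π} > 0`.
-/

lemma Theta3'_term_eq_jacobiTheta₂'_term (u τ : ℂ) (n : ℤ) :
    I * (2 * (n : ℂ)) * cexp (Real.pi * I * τ * (n : ℂ) ^ 2 + 2 * I * (n : ℂ) * u) =
      jacobiTheta₂'_term n (u / Real.pi) τ / Real.pi := by
  have hπ : (Real.pi : ℂ) ≠ 0 := ofReal_ne_zero.2 Real.pi_ne_zero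
  rw [jacobiTheta₂'_term, jacobiTheta₂_term]
  field_simp
  ring_nf

lemma hasSum_Theta3' (u : ℂ) {τ : ℂ} (hτ : 0 < τ.im) :
    HasSum (fun n : ℤ => I * (2 * (n : ℂ)) *
      cexp (Real.pi * I * τ * (n : ℂ) ^ 2 + 2 * I * (n : ℂ) * u)) (Theta3' u τ) := by
  refine Summable.hasSum ?_
  simp_rw [Theta3'_term_eq_jacobiTheta₂'_term]
  exact ((summable_jacobiTheta₂'_term_iff _ _).2 hτ).div_const _

namespace Theta3'

open Real Finset Filter

noncomputable def specialCoeff (n : ℤ) : ℝ :=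
  2 * n * (-1) ^ n * rexp (-π * (n * (n + 1)))

noncomputable def pairedCoeff (n : ℕ) : ℝ :=
  2 * (2 * n + 1) * rexp (-π * (n * (n + 1)))

lemma term_special_point (n : ℤ) :
    I * (2 * (n : ℂ)) * cexp (π * I * I * (n : ℂ) ^ 2 + 2 * I * (n : ℂ) * (π * (1 + I) / 2)) =
      I * specialCoeff n := by
  have harg : (π : ℂ) * I * I * (n : ℂ) ^ 2 + 2 * I * (n : ℂ) * (π * (1 + I) / 2) =
      ((-π * (n * (n + 1)) : ℝ) : ℂ) + n * (π * I) := by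
    push_cast
    linear_combination (π * (n : ℂ) ^ 2 + π * n) * I_sq
  rw [harg, Complex.exp_add, exp_int_mul, exp_pi_mul_I, specialCoeff]
  push_cast
  ring

lemma specialCoeff_add_specialCoeff_neg (n : ℕ) :
    specialCoeff n + specialCoeff (-(n + 1)) = (-1) ^ n * pairedCoeff n := by
  have hsign : (-1 : ℝ) ^ (-((n : ℤ) + 1)) = -(-1) ^ n := by
    rw [zpow_neg, zpow_add_one₀ (by norm_num), zpow_natCast]
    rcases neg_one_pow_eq_or ℝ n with h | h <;> simp [h]
  have hexp : (((-((n : ℤ) + 1) : ℤ) : ℝ) * ((-((n : ℤ) + 1) : ℤ) + 1)) = n * (n + 1) := by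
    push_cast; ring
  rw [specialCoeff, specialCoeff, hsign, hexp, pairedCoeff, zpow_natCast]
  push_cast
  ring

lemma three_lt_exp_two_pi : 3 < rexp (2 * π) := by
  have := add_one_lt_exp (by positivity : 2 * π ≠ 0)
  linarith [pi_gt_three]

lemma pairedCoeff_antitone : Antitone pairedCoeff := by
  refine antitone_nat_of_succ_le fun n => ?_
  have hdecay : rexp (-π * ((n + 1 : ℕ) * ((n + 1 : ℕ) + 1))) =
      rexp (-π * (n * (n + 1))) * (rexp (2 * π) ^ (n + 1))⁻¹ := by
    rw [← Real.exp_nat_mul, ← Real.exp_neg, ← Real.exp_add]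
    push_cast; ring_nf
  have hpow : 3 ≤ rexp (2 * π) ^ (n + 1) :=
    three_lt_exp_two_pi.le.trans (le_self_pow₀ (one_le_exp (by positivity)) (by omega))
  have hfactor :
      2 * (2 * ((n + 1 : ℕ) : ℝ) + 1) * (rexp (2 * π) ^ (n + 1))⁻¹ ≤ 2 * (2 * n + 1) := by
    rw [← div_eq_mul_inv, div_le_iff₀ (by positivity)]
    push_cast
    nlinarith
  rw [pairedCoeff, pairedCoeff, hdecay, ← mul_assoc, mul_right_comm]
  exact mul_le_mul_of_nonneg_right hfactor (exp_pos _).le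

lemma pairedCoeff_zero_sub_pairedCoeff_one_pos : 0 < pairedCoeff 0 - pairedCoeff 1 := by
  have h : rexp (-π * (1 * (1 + 1))) = (rexp (2 * π))⁻¹ := by
    rw [← Real.exp_neg]; ring_nf
  simp only [pairedCoeff, Nat.cast_zero, Nat.cast_one, zero_mul, mul_zero, Real.exp_zero, h]
  have := three_lt_exp_two_pi
  rw [sub_pos, ← div_eq_mul_inv, div_lt_iff₀ (by positivity)]
  nlinarith

lemma tsum_specialCoeff_pos (h : Summable specialCoeff) : 0 < ∑' n, specialCoeff n := by
  have hpair := h.hasSum.nat_add_neg_add_one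
  simp_rw [specialCoeff_add_specialCoeff_neg] at hpair
  calc 0 < pairedCoeff 0 - pairedCoeff 1 := pairedCoeff_zero_sub_pairedCoeff_one_pos
    _ = ∑ i ∈ range (2 * 1), (-1) ^ i * pairedCoeff i := by simp [sum_range_succ, sub_eq_add_neg]
    _ ≤ ∑' n, specialCoeff n :=
      pairedCoeff_antitone.alternating_series_le_tendsto hpair.tendsto_sum_nat 1

end Theta3'

theorem theta_deriv_special_point_purely_imaginary :
    (Theta3' ((Real.pi : ℂ) * (1 + I) / 2) I).re = 0 ∧
      Theta3' ((Real.pi : ℂ) * (1 + I) / 2) I ≠ 0 := by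
  have h := hasSum_Theta3' ((Real.pi : ℂ) * (1 + I) / 2) (τ := I) (by simp)
  simp_rw [Theta3'.term_special_point] at h
  obtain ⟨hre, him⟩ := (Complex.hasSum_iff _ _).1 h
  simp only [mul_re, I_re, I_im, ofReal_re, ofReal_im, zero_mul, one_mul, sub_zero, mul_im,
    zero_add] at hre him
  have him_pos := Theta3'.tsum_specialCoeff_pos him.summable
  rw [him.tsum_eq] at him_pos
  exact ⟨hre.unique hasSum_zero, fun h0 => by simp [h0] at him_pos⟩
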